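/- arXiv:2401.16916 — 3 statements merged into one kernel-verified Lean document; each statement's English description precedes it below -/
import Mathlib

section
/- For each n ≥ 3, let A_n be the n×n nilpotent Jordan block (with 1's on the superdiagonal and 0 elsewhere) and let B_n be the n×n matrix with a 1 in position (n,1) and 0 elsewhere. Then the commutator A_n B_n − B_n A_n is nilpotent, but A_n^{n−2}(A_n B_n − B_n A_n) is not nilpotent. -/
/-- The n×n nilpotent Jordan block: 1's on the superdiagonal. -/
def jordanBlock (n : ℕ) : Matrix (Fin n) (Fin n) ℂ :=
  Matrix.of fun i j => if (i : ℕ) + 1 = (j : ℕ) then 1 else 0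

/-- The n×n matrix with a single 1 in position (n,1) (bottom-left corner). -/
def cornerMatrix (n : ℕ) : Matrix (Fin n) (Fin n) ℂ :=
  Matrix.of fun i j => if (i : ℕ) = n - 1 ∧ (j : ℕ) = 0 then 1 else 0

/-- helper: summing an indicator over `Fin n`. -/
lemma sum_ite_fin (n a : ℕ) (f : Fin n → ℂ) :
    (∑ k : Fin n, if (k : ℕ) = a then f k else 0) =
      if h : a < n then f ⟨a, h⟩ else 0 := by
  split_ifs with h
  · rw [Finset.sum_eq_single (⟨a, h⟩ : Fin n)]
    · simp
    · intro b _ hb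
      have : (b : ℕ) ≠ a := by simpa [Fin.ext_iff] using hb
      simp [this]
    · simp
  · apply Finset.sum_eq_zero
    intro k _
    have : (k : ℕ) ≠ a := by omega
    simp [this]

lemma comm_apply (n : ℕ) (hn : 3 ≤ n) (i j : Fin n) :
    (jordanBlock n * cornerMatrix n - cornerMatrix n * jordanBlock n) i j =
      (if (i : ℕ) = n - 2 ∧ (j : ℕ) = 0 then 1 else 0) -
      (if (i : ℕ) = n - 1 ∧ (j : ℕ) = 1 then 1 else 0) := by
  have h1 : (jordanBlock n * cornerMatrix n) i j =
      (if (i : ℕ) = n - 2 ∧ (j : ℕ) = 0 then 1 else 0) := by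
    rw [Matrix.mul_apply]
    have : ∀ k : Fin n, jordanBlock n i k * cornerMatrix n k j =
        (if (k : ℕ) = (i : ℕ) + 1 then
          (if (k : ℕ) = n - 1 ∧ (j : ℕ) = 0 then 1 else 0) else 0) := by
      intro k
      simp only [jordanBlock, cornerMatrix, Matrix.of_apply]
      split_ifs <;> (first | ring1 | (exfalso; omega))
    rw [Finset.sum_congr rfl (fun k _ => this k), sum_ite_fin]
    have hi := i.isLt
    split_ifs <;> simp_all <;> omega
  have h2 : (cornerMatrix n * jordanBlock n) i j =
      (if (i : ℕ) = n - 1 ∧ (j : ℕ) = 1 then 1 else 0) := by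
    rw [Matrix.mul_apply]
    have : ∀ k : Fin n, cornerMatrix n i k * jordanBlock n k j =
        (if (k : ℕ) = 0 then
          (if (i : ℕ) = n - 1 ∧ (k : ℕ) + 1 = (j : ℕ) then 1 else 0) else 0) := by
      intro k
      simp only [jordanBlock, cornerMatrix, Matrix.of_apply]
      split_ifs <;> (first | ring1 | (exfalso; omega))
    rw [Finset.sum_congr rfl (fun k _ => this k), sum_ite_fin]
    have : 0 < n := by omega
    split_ifs <;> simp_all <;> omega
  rw [Matrix.sub_apply, h1, h2]

lemma jordan_pow_apply (n k : ℕ) (i j : Fin n) :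
    ((jordanBlock n) ^ k) i j = if (i : ℕ) + k = (j : ℕ) then 1 else 0 := by
  induction k generalizing i j with
  | zero =>
    simp only [pow_zero, Matrix.one_apply, Fin.ext_iff]
    split_ifs <;> (first | rfl | (exfalso; omega))
  | succ m ih =>
    rw [pow_succ, Matrix.mul_apply]
    have : ∀ l : Fin n, ((jordanBlock n) ^ m) i l * jordanBlock n l j =
        (if (l : ℕ) = (i : ℕ) + m then
          (if (l : ℕ) + 1 = (j : ℕ) then 1 else 0) else 0) := by
      intro l
      rw [ih]
      simp only [jordanBlock, Matrix.of_apply]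
      split_ifs <;> (first | ring1 | (exfalso; omega))
    rw [Finset.sum_congr rfl (fun l _ => this l), sum_ite_fin]
    have hj := j.isLt
    split_ifs <;> simp_all <;> omega

lemma final_apply (n : ℕ) (hn : 3 ≤ n) (i j : Fin n) :
    ((jordanBlock n) ^ (n - 2) *
      (jordanBlock n * cornerMatrix n - cornerMatrix n * jordanBlock n)) i j =
      (if (i : ℕ) = 0 ∧ (j : ℕ) = 0 then 1 else 0) -
      (if (i : ℕ) = 1 ∧ (j : ℕ) = 1 then 1 else 0) := by
  rw [Matrix.mul_apply]
  have : ∀ k : Fin n, ((jordanBlock n) ^ (n - 2)) i k *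
      (jordanBlock n * cornerMatrix n - cornerMatrix n * jordanBlock n) k j =
      (if (k : ℕ) = (i : ℕ) + (n - 2) then
        ((if (k : ℕ) = n - 2 ∧ (j : ℕ) = 0 then 1 else 0) -
         (if (k : ℕ) = n - 1 ∧ (j : ℕ) = 1 then 1 else 0)) else 0) := by
    intro k
    rw [jordan_pow_apply, comm_apply n hn]
    split_ifs <;> (first | ring1 | (exfalso; omega))
  rw [Finset.sum_congr rfl (fun k _ => this k), sum_ite_fin]
  have hi := i.isLt
  split_ifs <;> simp_all <;> omega

theorem stmt_2 (n : ℕ) (hn : 3 ≤ n) :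
    IsNilpotent (jordanBlock n * cornerMatrix n - cornerMatrix n * jordanBlock n) ∧
    ¬ IsNilpotent ((jordanBlock n) ^ (n - 2) *
      (jordanBlock n * cornerMatrix n - cornerMatrix n * jordanBlock n)) := by
  constructor
  · refine ⟨3, ?_⟩
    rw [pow_succ, pow_two]
    ext i j
    rw [Matrix.mul_apply, Matrix.zero_apply]
    apply Finset.sum_eq_zero
    intro l _
    rw [Matrix.mul_apply, Finset.sum_mul]
    apply Finset.sum_eq_zero
    intro k _
    rw [comm_apply n hn i k, comm_apply n hn k l, comm_apply n hn l j]
    split_ifs <;> (first | ring1 | (exfalso; omega))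
  · intro ⟨m, hm⟩
    set M := (jordanBlock n) ^ (n - 2) *
      (jordanBlock n * cornerMatrix n - cornerMatrix n * jordanBlock n) with hM
    set v : Fin n → ℂ := fun j => if (j : ℕ) = 0 then 1 else 0 with hv
    have hMv : M.mulVec v = v := by
      funext i
      rw [Matrix.mulVec, dotProduct]
      have : ∀ j : Fin n, M i j * v j =
          (if (j : ℕ) = 0 then (if (i : ℕ) = 0 then 1 else 0) else 0) := by
        intro j
        rw [hM, final_apply n hn]
        simp only [hv]
        split_ifs <;> (first | ring1 | (exfalso; omega))
      rw [Finset.sum_congr rfl (fun j _ => this j), sum_ite_fin]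
      have h0 : 0 < n := by omega
      simp only [hv]
      split_ifs <;> simp_all <;> omega
    have hpow : ∀ k : ℕ, (M ^ k).mulVec v = v := by
      intro k
      induction k with
      | zero => simp [Matrix.one_mulVec]
      | succ t ih =>
        rw [pow_succ, ← Matrix.mulVec_mulVec, hMv, ih]
    have h := hpow m
    rw [hm] at h
    have h0 : (0 : ℕ) < n := by omega
    have := congrFun h ⟨0, h0⟩
    simp [hv, Matrix.zero_mulVec] at this
end

section
/- Every square complex matrix C ∈ M_n(ℂ) with trace zero can be written as a commutator: there exist A, B ∈ M_n(ℂ) with C = AB − BA. In particular, every nilpotent matrix is a commutator of matrices. -/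
/-!
Over a field of characteristic zero, a traceless endomorphism `f` of a finite-dimensional space
has a basis in which its matrix has zero diagonal. A traceless scalar map is zero; otherwise pick
`v` with `v, f v` independent and a complement `q` of `K ∙ v` containing `f v`. Then the
compression of `f` to `K ∙ v` vanishes, so the compression of `f` to `q` is again traceless and
induction on the dimension applies to it. Finally, a matrix `M` with zero diagonal is the
commutator of `diagonal d` and `X i j = M i j / (d i - d j)` for any injective `d`.
-/

open Module

namespace Submodule

section Ring

variable {R V : Type*} [Ring R] [AddCommGroup V] [Module R V] {p q : Submodule R V}

noncomputable def compression (h : IsCompl p q) (f : Module.End R V) : Module.End R p :=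
  p.projectionOnto q h ∘ₗ f ∘ₗ p.subtype

theorem compression_span_singleton_eq_zero {x : V} {f : Module.End R V}
    (h : IsCompl (R ∙ x) q) (hfx : f x ∈ q) : compression h f = 0 := by
  ext ⟨y, hy⟩
  obtain ⟨c, rfl⟩ := mem_span_singleton.mp hy
  simp [compression, projectionOnto_apply_of_mem_right h hfx]

end Ring

theorem trace_eq_trace_compression_add_trace_compression {R V : Type*} [CommRing R]
    [AddCommGroup V] [Module R V] [Free R V] [Module.Finite R V] {p q : Submodule R V}
    [Free R p] [Module.Finite R p] [Free R q] [Module.Finite R q]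
    (h : IsCompl p q) (f : Module.End R V) :
    LinearMap.trace R V f =
      LinearMap.trace R p (compression h f) + LinearMap.trace R q (compression h.symm f) := by
  conv_lhs => rw [← LinearMap.id_comp f, ← projection_add_projection_eq_id h]
  rw [LinearMap.add_comp, map_add, projection, projection, LinearMap.comp_assoc,
    LinearMap.comp_assoc, LinearMap.trace_comp_comm' (p.projectionOnto q h ∘ₗ f),
    LinearMap.trace_comp_comm' (q.projectionOnto p h.symm ∘ₗ f)]
  rfl

theorem exists_isCompl_span_singleton_of_linearIndependent {K V : Type*} [DivisionRing K]
    [AddCommGroup V] [Module K V] {x y : V} (hxy : LinearIndependent K ![x, y]) :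
    ∃ q : Submodule K V, IsCompl (K ∙ x) q ∧ y ∈ q := by
  have hdisj : Disjoint (K ∙ y) (K ∙ x) := by
    refine disjoint_span_singleton.mpr fun hx => ?_
    obtain ⟨c, rfl⟩ := mem_span_singleton.mp hx
    exact absurd (LinearIndependent.pair_iff.mp hxy 1 (-c) (by simp)).1 one_ne_zero
  obtain ⟨q, hyq, hq⟩ := hdisj.exists_isCompl
  exact ⟨q, hq.symm, hyq (mem_span_singleton_self y)⟩

end Submodule

namespace Module.Basis

variable {R V ι κ : Type*}

noncomputable def ofIsCompl [Ring R] [AddCommGroup V] [Module R V] {p q : Submodule R V}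
    (h : IsCompl p q) (bp : Basis ι R p) (bq : Basis κ R q) : Basis (ι ⊕ κ) R V :=
  (bp.prod bq).map (p.prodEquivOfIsCompl q h)

variable [CommRing R] [AddCommGroup V] [Module R V] {p q : Submodule R V}
  [Fintype ι] [Fintype κ] [DecidableEq ι] [DecidableEq κ]
  (h : IsCompl p q) (bp : Basis ι R p) (bq : Basis κ R q) (f : Module.End R V)

theorem toMatrix_ofIsCompl_inl_inl (i j : ι) :
    LinearMap.toMatrix (ofIsCompl h bp bq) (ofIsCompl h bp bq) f (.inl i) (.inl j) =
      LinearMap.toMatrix bp bp (p.compression h f) i j := by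
  simp [ofIsCompl, LinearMap.toMatrix_apply, Submodule.compression]

theorem toMatrix_ofIsCompl_inr_inr (i j : κ) :
    LinearMap.toMatrix (ofIsCompl h bp bq) (ofIsCompl h bp bq) f (.inr i) (.inr j) =
      LinearMap.toMatrix bq bq (q.compression h.symm f) i j := by
  simp [ofIsCompl, LinearMap.toMatrix_apply, Submodule.compression]

end Module.Basis

theorem LinearMap.exists_basis_diag_toMatrix_eq_zero {K V : Type*} [Field K] [CharZero K]
    [AddCommGroup V] [Module K V] [FiniteDimensional K V] (f : Module.End K V)
    (hf : trace K V f = 0) :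
    ∃ b : Basis (Fin (finrank K V)) K V, (toMatrix b b f).diag = 0 := by
  induction hn : finrank K V generalizing V with
  | zero => exact ⟨(finBasis K V).reindex (finCongr hn), funext fun i => i.elim0⟩
  | succ n ih =>
    by_cases hscalar : ∀ v, ¬ LinearIndependent K ![v, f v]
    · obtain ⟨a, rfl⟩ := exists_eq_smul_id_of_forall_notLinearIndependent hscalar
      have ha : a = 0 := by simpa [hn, Nat.cast_add_one_ne_zero] using hf
      exact ⟨(finBasis K V).reindex (finCongr hn), by simp [ha]⟩
    push Not at hscalar
    obtain ⟨v, hv⟩ := hscalar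
    obtain ⟨q, hq, hfv⟩ := Submodule.exists_isCompl_span_singleton_of_linearIndependent hv
    have hcomp := Submodule.compression_span_singleton_eq_zero hq hfv
    have hrank : finrank K (K ∙ v) + finrank K q = n + 1 := by
      rw [Submodule.finrank_add_eq_of_isCompl hq, hn]
    have hqrank : finrank K q = n := by
      have hv0 : v ≠ 0 := hv.ne_zero 0
      rw [finrank_span_singleton hv0] at hrank
      omega
    have hqtrace : trace K q (q.compression hq.symm f) = 0 := by
      rw [← hf, (K ∙ v).trace_eq_trace_compression_add_trace_compression hq, hcomp, map_zero,
        zero_add]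
    obtain ⟨bq, hbq⟩ := ih (q.compression hq.symm f) hqtrace hqrank
    let b := Basis.ofIsCompl hq (finBasis K (K ∙ v)) bq
    have hb : (toMatrix b b f).diag = 0 := by
      ext (i | i)
      · simp [b, Basis.toMatrix_ofIsCompl_inl_inl, hcomp]
      · simpa [b, Basis.toMatrix_ofIsCompl_inr_inr] using congrFun hbq i
    refine ⟨b.reindex (finSumFinEquiv.trans (finCongr (hqrank ▸ hrank))), ?_⟩
    ext i
    simpa [toMatrix_apply, Basis.repr_reindex_apply, -Basis.repr_reindex] using congrFun hb _

namespace Matrix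

variable {K ι : Type*} [Field K] [Fintype ι] [DecidableEq ι]

theorem eq_diagonal_mul_sub_mul_diagonal_of_diag_eq_zero {d : ι → K}
    (hd : Function.Injective d) {M : Matrix ι ι K} (hM : M.diag = 0) :
    let X : Matrix ι ι K := of fun i j => M i j / (d i - d j)
    M = diagonal d * X - X * diagonal d := by
  ext i j
  rcases eq_or_ne i j with rfl | hij
  · simpa using congrFun hM i
  · have hdij : d i - d j ≠ 0 := sub_ne_zero.mpr (hd.ne hij)
    simp only [sub_apply, diagonal_mul, mul_diagonal, of_apply]
    field_simp

theorem exists_eq_mul_sub_mul_of_diag_eq_zero [CharZero K] {M : Matrix ι ι K}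
    (hM : M.diag = 0) : ∃ A B : Matrix ι ι K, M = A * B - B * A :=
  ⟨_, _, eq_diagonal_mul_sub_mul_diagonal_of_diag_eq_zero
    (Nat.cast_injective.comp (Fin.val_injective.comp (Fintype.equivFin ι).injective)) hM⟩

end Matrix

theorem Module.End.exists_eq_mul_sub_mul_of_trace_eq_zero {K V : Type*} [Field K] [CharZero K]
    [AddCommGroup V] [Module K V] [FiniteDimensional K V] {f : Module.End K V}
    (hf : LinearMap.trace K V f = 0) : ∃ g h : Module.End K V, f = g * h - h * g := by
  obtain ⟨b, hb⟩ := LinearMap.exists_basis_diag_toMatrix_eq_zero f hf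
  obtain ⟨A, B, hAB⟩ := Matrix.exists_eq_mul_sub_mul_of_diag_eq_zero hb
  let e := LinearMap.toMatrixAlgEquiv b
  refine ⟨e.symm A, e.symm B, ?_⟩
  rw [← map_mul, ← map_mul, ← map_sub, ← hAB]
  exact (e.symm_apply_apply f).symm

theorem Matrix.exists_eq_mul_sub_mul_of_trace_eq_zero {K ι : Type*} [Field K] [CharZero K]
    [Fintype ι] [DecidableEq ι] {C : Matrix ι ι K} (hC : C.trace = 0) :
    ∃ A B : Matrix ι ι K, C = A * B - B * A := by
  obtain ⟨g, h, hgh⟩ :=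
    Module.End.exists_eq_mul_sub_mul_of_trace_eq_zero (f := toLin' C) (by simpa)
  let e := LinearMap.toMatrixAlgEquiv' (R := K) (n := ι)
  refine ⟨e g, e h, ?_⟩
  rw [← map_mul, ← map_mul, ← map_sub, ← hgh]
  exact (LinearMap.toMatrix'_toLin' C).symm

/-- Albert–Muckenhoupt: every trace-zero complex matrix is a commutator; in particular
every nilpotent matrix is a commutator of matrices. -/
theorem stmt_13 (n : ℕ) (C : Matrix (Fin n) (Fin n) ℂ) :
    (Matrix.trace C = 0 → ∃ A B : Matrix (Fin n) (Fin n) ℂ, C = A * B - B * A) ∧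
    (IsNilpotent C → ∃ A B : Matrix (Fin n) (Fin n) ℂ, C = A * B - B * A) :=
  ⟨Matrix.exists_eq_mul_sub_mul_of_trace_eq_zero,
    fun hC => Matrix.exists_eq_mul_sub_mul_of_trace_eq_zero
      (Matrix.isNilpotent_trace_of_isNilpotent hC).eq_zero⟩
end

section
/- For n ≥ 3 let P_n = (1/n)A_n and Q_n = (1/n)B_n, where A_n is the n×n Jordan nilpotent block and B_n has a single 1 at entry (n,1). Then ‖P_n‖ = ‖Q_n‖ = 1/n, the commutator [P_n, Q_n] is nilpotent, and P_n^{n−2}[P_n, Q_n] = diag(n^{−n}, −n^{−n}, 0, …, 0) is not nilpotent. -/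
/-- P_n = (1/n)A_n, Q_n = (1/n)B_n. -/
noncomputable def Pmat (n : ℕ) : Matrix (Fin n) (Fin n) ℂ := (n : ℂ)⁻¹ • jordanBlock n
noncomputable def Qmat (n : ℕ) : Matrix (Fin n) (Fin n) ℂ := (n : ℂ)⁻¹ • cornerMatrix n

/-!
Both norms come from the C*-identity `‖A‖ ^ 2 = ‖Aᴴ * A‖`: for the Jordan block and for the
corner matrix, `Aᴴ * A` is a nonzero diagonal 0/1 projection. In matrix units the commutator is
`n⁻² (E_{n-2,0} - E_{n-1,1})`; the products of these two units vanish except one, so it cubes to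
zero, while `A ^ (n - 2)` moves both units up to the top-left corner, giving
`n⁻ⁿ (E_{0,0} - E_{1,1})`, a diagonal matrix with a nonzero entry.
-/

open Matrix

theorem conjTranspose_jordanBlock_mul_self (n : ℕ) :
    (jordanBlock n)ᴴ * jordanBlock n = diagonal fun i : Fin n => if 0 < (i : ℕ) then 1 else 0 := by
  ext i j
  simp only [jordanBlock, mul_apply, conjTranspose_apply, of_apply, RCLike.star_def,
    MonoidWithZeroHom.map_ite_one_zero, mul_ite, mul_one, mul_zero, diagonal_apply]
  rcases eq_or_ne i j with rfl | hij
  · rw [if_pos rfl]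
    split_ifs with hi
    · rw [Finset.sum_eq_single ⟨i - 1, by omega⟩] <;> simp [Fin.ext_iff] <;> omega
    · exact Finset.sum_eq_zero fun k _ => by simp; omega
  · rw [if_neg hij]
    refine Finset.sum_eq_zero fun k _ => ?_
    split_ifs <;> simp_all [Fin.ext_iff]

theorem cornerMatrix_eq_single {n : ℕ} (hn : 0 < n) :
    cornerMatrix n = single ⟨n - 1, by omega⟩ ⟨0, hn⟩ 1 := by
  ext i j
  simp [cornerMatrix, single_apply, Fin.ext_iff, eq_comm]

theorem conjTranspose_cornerMatrix_mul_self {n : ℕ} (hn : 0 < n) :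
    (cornerMatrix n)ᴴ * cornerMatrix n =
      diagonal fun i : Fin n => if (i : ℕ) = 0 then 1 else 0 := by
  rw [cornerMatrix_eq_single hn, conjTranspose_single, single_mul_single_same, ← diagonal_single]
  ext i j
  simp [diagonal_apply, Pi.single_apply, Fin.ext_iff]

section L2OpNorm

open scoped Matrix.Norms.L2Operator

variable {𝕜 ι : Type*} [RCLike 𝕜] [Fintype ι]

theorem pi_norm_ite_one_zero {p : ι → Prop} [DecidablePred p] (hp : ∃ i, p i) :
    ‖fun i => if p i then (1 : 𝕜) else 0‖ = 1 := by
  obtain ⟨i, hi⟩ := hp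
  refine le_antisymm ((pi_norm_le_iff_of_nonneg zero_le_one).2 fun j => ?_) ?_
  · split_ifs <;> simp
  · simpa [hi] using norm_le_pi_norm (fun i => if p i then (1 : 𝕜) else 0) i

theorem l2_opNorm_eq_one_of_conjTranspose_mul_self_eq_diagonal [DecidableEq ι] {A : Matrix ι ι 𝕜}
    {p : ι → Prop} [DecidablePred p] (hA : Aᴴ * A = diagonal fun i => if p i then 1 else 0)
    (hp : ∃ i, p i) : ‖A‖ = 1 := by
  have h := l2_opNorm_conjTranspose_mul_self A
  rw [hA, l2_opNorm_diagonal, pi_norm_ite_one_zero hp] at h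
  nlinarith [norm_nonneg A]

theorem norm_toEuclideanCLM_Pmat {n : ℕ} (hn : 2 ≤ n) :
    ‖toEuclideanCLM (𝕜 := ℂ) (Pmat n)‖ = 1 / n := by
  rw [l2_opNorm_toEuclideanCLM, Pmat, norm_smul,
    l2_opNorm_eq_one_of_conjTranspose_mul_self_eq_diagonal (conjTranspose_jordanBlock_mul_self n)
      ⟨⟨1, hn⟩, Nat.one_pos⟩, mul_one, norm_inv, Complex.norm_natCast, one_div]

theorem norm_toEuclideanCLM_Qmat {n : ℕ} (hn : 0 < n) :
    ‖toEuclideanCLM (𝕜 := ℂ) (Qmat n)‖ = 1 / n := by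
  rw [l2_opNorm_toEuclideanCLM, Qmat, norm_smul,
    l2_opNorm_eq_one_of_conjTranspose_mul_self_eq_diagonal
      (conjTranspose_cornerMatrix_mul_self hn) ⟨⟨0, hn⟩, rfl⟩,
    mul_one, norm_inv, Complex.norm_natCast, one_div]

end L2OpNorm

theorem jordanBlock_mul_single {n : ℕ} {a a' : Fin n} (h : (a' : ℕ) + 1 = a) (b : Fin n) (c : ℂ) :
    jordanBlock n * single a b c = single a' b c := by
  ext i j
  by_cases hj : j = b
  · subst hj
    simp only [jordanBlock, mul_single_apply_same, of_apply, ite_mul, one_mul, zero_mul,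
      single_apply, Fin.ext_iff, and_true]
    split_ifs <;> first | rfl | omega
  · simp [Ne.symm hj, hj]

theorem single_mul_jordanBlock {n : ℕ} (a : Fin n) {b b' : Fin n} (h : (b : ℕ) + 1 = b') (c : ℂ) :
    single a b c * jordanBlock n = single a b' c := by
  ext i j
  by_cases hi : i = a
  · subst hi
    simp only [jordanBlock, single_mul_apply_same, of_apply, mul_ite, mul_one, mul_zero,
      single_apply, Fin.ext_iff, true_and]
    split_ifs <;> first | rfl | omega
  · simp [Ne.symm hi, hi]

theorem jordanBlock_pow_mul_single {n : ℕ} (k : ℕ) {a a' : Fin n} (h : (a' : ℕ) + k = a)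
    (b : Fin n) (c : ℂ) : jordanBlock n ^ k * single a b c = single a' b c := by
  induction k generalizing a' with
  | zero => rw [pow_zero, one_mul, Fin.ext (by omega : (a' : ℕ) = a)]
  | succ k ih =>
    have ha' : (a' : ℕ) + 1 < n := by omega
    rw [pow_succ', mul_assoc, ih (a' := ⟨a' + 1, ha'⟩) (by simp; omega),
      jordanBlock_mul_single rfl]

theorem isNilpotent_sub_of_mul_eq_zero {R : Type*} [Ring R] {u v : R} (huu : u * u = 0)
    (huv : u * v = 0) (hvv : v * v = 0) : IsNilpotent (u - v) := by
  refine ⟨3, ?_⟩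
  have hsq : (u - v) * (u - v) = -(v * u) := by
    rw [mul_sub, sub_mul, sub_mul, huu, huv, hvv]
    abel
  rw [pow_three, ← mul_assoc, hsq, neg_mul, mul_assoc, mul_sub, huu, huv, sub_zero, mul_zero,
    neg_zero]

theorem not_isNilpotent_diagonal {ι R : Type*} [Fintype ι] [DecidableEq ι] [CommRing R]
    [IsReduced R] {d : ι → R} {i : ι} (hi : d i ≠ 0) : ¬IsNilpotent (diagonal d) := by
  rintro ⟨k, hk⟩
  have := congr_fun (congr_fun hk i) i
  rw [diagonal_pow, diagonal_apply_eq, Matrix.zero_apply, Pi.pow_apply] at this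
  exact hi (IsReduced.eq_zero _ ⟨k, this⟩)

theorem lie_Pmat_Qmat {n : ℕ} (hn : 2 ≤ n) :
    ⁅Pmat n, Qmat n⁆ = ((n : ℂ) ^ 2)⁻¹ •
      (single ⟨n - 2, by omega⟩ ⟨0, by omega⟩ 1 - single ⟨n - 1, by omega⟩ ⟨1, hn⟩ 1) := by
  rw [Ring.lie_def, Pmat, Qmat, cornerMatrix_eq_single (by omega), smul_mul_smul_comm,
    smul_mul_smul_comm,     jordanBlock_mul_single (a' := ⟨n - 2, by omega⟩) (by simp; omega),
    single_mul_jordanBlock _ (b' := ⟨1, hn⟩) rfl, ← smul_sub, sq, mul_inv]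

theorem isNilpotent_lie_Pmat_Qmat {n : ℕ} (hn : 3 ≤ n) : IsNilpotent ⁅Pmat n, Qmat n⁆ := by
  rw [lie_Pmat_Qmat (by omega)]
  refine .smul (isNilpotent_sub_of_mul_eq_zero ?_ ?_ ?_) _ <;>
    exact single_mul_single_of_ne _ _ _ _ (by simp [Fin.ext_iff]; omega) _

theorem Pmat_pow_mul_lie_Pmat_Qmat {n : ℕ} (hn : 2 ≤ n) :
    Pmat n ^ (n - 2) * ⁅Pmat n, Qmat n⁆ =
      diagonal fun i : Fin n =>
        if (i : ℕ) = 0 then ((n : ℂ) ^ n)⁻¹ else if (i : ℕ) = 1 then -((n : ℂ) ^ n)⁻¹ else 0 := by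
  have hsingle : Pmat n ^ (n - 2) * ⁅Pmat n, Qmat n⁆ =
      ((n : ℂ) ^ n)⁻¹ • (single ⟨0, by omega⟩ ⟨0, by omega⟩ 1 - single ⟨1, hn⟩ ⟨1, hn⟩ 1) := by
    rw [lie_Pmat_Qmat hn, Pmat, smul_pow, smul_mul_smul_comm, mul_sub,
      jordanBlock_pow_mul_single _ (a' := ⟨0, by omega⟩) (by simp),
      jordanBlock_pow_mul_single _ (a' := ⟨1, hn⟩) (by simp; omega), inv_pow, ← mul_inv,
      ← pow_add, Nat.sub_add_cancel hn]
  rw [hsingle, ← diagonal_single, ← diagonal_single, diagonal_sub, ← diagonal_smul]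
  congr 1
  ext i
  simp only [Pi.smul_apply, Pi.single_apply, Fin.ext_iff, smul_eq_mul]
  split_ifs <;> first | omega | simp

theorem stmt_16 (n : ℕ) (hn : 3 ≤ n) :
    ‖Matrix.toEuclideanCLM (𝕜 := ℂ) (Pmat n)‖ = 1 / n ∧
    ‖Matrix.toEuclideanCLM (𝕜 := ℂ) (Qmat n)‖ = 1 / n ∧
    IsNilpotent (Pmat n * Qmat n - Qmat n * Pmat n) ∧
    (Pmat n) ^ (n - 2) * (Pmat n * Qmat n - Qmat n * Pmat n) =
      Matrix.of (fun i j : Fin n =>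
        if i = j ∧ (i : ℕ) = 0 then ((n : ℂ) ^ n)⁻¹
        else if i = j ∧ (i : ℕ) = 1 then -((n : ℂ) ^ n)⁻¹ else 0) ∧
    ¬ IsNilpotent ((Pmat n) ^ (n - 2) * (Pmat n * Qmat n - Qmat n * Pmat n)) := by
  simp only [← Ring.lie_def]
  refine ⟨norm_toEuclideanCLM_Pmat (by omega), norm_toEuclideanCLM_Qmat (by omega),
    isNilpotent_lie_Pmat_Qmat hn, ?_, ?_⟩ <;> rw [Pmat_pow_mul_lie_Pmat_Qmat (by omega)]
  · ext i j
    by_cases hij : i = j <;> simp [hij]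
  · have hn0 : (n : ℂ) ≠ 0 := Nat.cast_ne_zero.mpr (by omega)
    exact not_isNilpotent_diagonal (i := ⟨0, by omega⟩) (by simp [hn0])
end
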